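/- Let Y be a G-tree containing a G-invariant subtree S (possibly all of Y) whose induced subgraph is locally finite and which is non-trivial (no vertex of S is fixed by every element of G). Let X be a G-tree and let q be a G-equivariant surjective map from the vertices of X to the vertices of Y that is a collapse map: adjacent vertices of X are sent to equal or adjacent vertices of Y, and for every vertex y of Y the preimage q⁻¹(y) induces a connected subgraph of X. Then X and Y have the same elliptic subgroups: a subgroup H ≤ G fixes a vertex of X if and only if it fixes a vertex of Y. -/

import Mathlib

/-- A `G`-tree: a simple graph `T` on vertex set `V` that is a tree (connected and acyclic),
together with an action of `G` on `V` by automorphisms of `T` (adjacency is preserved)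
and without inversions. -/
structure IsGTree (G : Type*) [Group G] {V : Type*} [MulAction G V] (T : SimpleGraph V) :
    Prop where
  isTree : T.IsTree
  adj_smul : ∀ (g : G) (u v : V), T.Adj u v → T.Adj (g • u) (g • v)
  no_inversions : ∀ (g : G) (u v : V), T.Adj u v → ¬(g • u = v ∧ g • v = u)

open SimpleGraph


open SimpleGraph

namespace CollapseAux

variable {V : Type*} {T : SimpleGraph V}

lemma walk_unique (hT : T.IsTree) {u v : V} (p q : T.Walk u v)
    (hp : p.IsPath) (hq : q.IsPath) : p = q := by
  have h := (SimpleGraph.isAcyclic_iff_path_unique.mp hT.2) ⟨p, hp⟩ ⟨q, hq⟩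
  exact congrArg Subtype.val h

lemma exists_geodesic (hT : T.IsTree) (u v : V) :
    ∃ p : T.Walk u v, p.IsPath ∧ p.length = T.dist u v := by
  classical
  obtain ⟨p, hp⟩ := hT.1.exists_walk_length_eq_dist u v
  refine ⟨p.toPath, p.toPath.2, le_antisymm ?_ (SimpleGraph.dist_le _)⟩
  calc (p.toPath : T.Walk u v).length ≤ p.length := Walk.length_bypass_le _
    _ = T.dist u v := hp

lemma dist_add_dist_le {a b : V} (p : T.Walk a b) {v : V}
    (hv : v ∈ p.support) : T.dist a v + T.dist v b ≤ p.length := by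
  classical
  have hlen : (p.takeUntil v hv).length + (p.dropUntil v hv).length = p.length := by
    rw [← Walk.length_append, p.take_spec hv]
  have h1 := SimpleGraph.dist_le (p.takeUntil v hv)
  have h2 := SimpleGraph.dist_le (p.dropUntil v hv)
  omega

lemma dist_ne_of_adj (hT : T.IsTree) {u v : V} (h : T.Adj u v) (w : V) :
    T.dist w u ≠ T.dist w v := by
  intro heq
  obtain ⟨p, hp, hl⟩ := exists_geodesic hT w u
  have hvu : 0 < T.dist v u := hT.1.pos_dist_of_ne (Ne.symm h.ne)
  have hv : v ∉ p.support := by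
    intro hmem
    have := dist_add_dist_le p hmem
    omega
  obtain ⟨q, hq, hlq⟩ := exists_geodesic hT w v
  have hP : (p.concat h).IsPath := by
    rw [← Walk.isPath_reverse_iff, Walk.reverse_concat]
    exact hp.reverse.cons (by simpa [Walk.support_reverse] using hv)
  have heqw := walk_unique hT (p.concat h) q hP hq
  have hlen : (p.concat h).length = q.length := by rw [heqw]
  rw [Walk.length_concat, hl, hlq] at hlen
  omega

/-- parity: distances from a fixed `w` to two adjacent vertices differ by exactly one. -/
lemma dist_adj_cases (hT : T.IsTree) {u v : V} (h : T.Adj u v) (w : V) :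
    T.dist w v = T.dist w u + 1 ∨ T.dist w u = T.dist w v + 1 := by
  have hd : T.dist u v = 1 := SimpleGraph.dist_eq_one_iff_adj.mpr h
  have hd' : T.dist v u = 1 := by rwa [SimpleGraph.dist_comm] at hd
  have h1 : T.dist w v ≤ T.dist w u + T.dist u v := hT.1.dist_triangle
  have h2 : T.dist w u ≤ T.dist w v + T.dist v u := hT.1.dist_triangle
  have hne := dist_ne_of_adj hT h w
  omega

/-- In a tree, the second vertex of a geodesic is unique: if `x` and `y` are neighbours of `u`
one step closer to `v`, then `x = y`. -/
lemma second_vertex_unique (hT : T.IsTree) {u v x y : V} (hx : T.Adj u x) (hy : T.Adj u y)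
    (hdx : T.dist x v + 1 = T.dist u v) (hdy : T.dist y v + 1 = T.dist u v) : x = y := by
  obtain ⟨px, hpx, hlx⟩ := exists_geodesic hT x v
  obtain ⟨py, hpy, hly⟩ := exists_geodesic hT y v
  have hux : u ∉ px.support := by
    intro hmem
    have := dist_add_dist_le px hmem
    omega
  have huy : u ∉ py.support := by
    intro hmem
    have := dist_add_dist_le py hmem
    omega
  have hP1 : (Walk.cons hx px).IsPath := hpx.cons hux
  have hP2 : (Walk.cons hy py).IsPath := hpy.cons huy
  have heq := walk_unique hT (Walk.cons hx px) (Walk.cons hy py) hP1 hP2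
  have h2 := congrArg (fun p => Walk.getVert p 1) heq
  simpa [Walk.getVert_cons_succ, Walk.getVert_zero] using h2

/-- Along a path towards a vertex at smaller-or-equal distance from `w`, the first step
goes strictly closer to `w`. -/
lemma downhill (hT : T.IsTree) (w : V) {b : V} :
    ∀ {a : V} (p : T.Walk a b), p.IsPath → ¬ p.Nil → T.dist w b ≤ T.dist w a →
      ∃ c, T.Adj a c ∧ c ∈ p.support ∧ T.dist w c + 1 = T.dist w a := by
  intro a p
  induction p with
  | nil => intro _ hnn _; exact absurd Walk.nil_nil hnn
  | @cons a c b h p' ih =>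
    intro hp hnn hle
    rcases dist_adj_cases hT h w with hcase | hcase
    · -- dist w c = dist w a + 1 : bad direction, recurse and contradict
      exfalso
      have hcb : c ≠ b := by
        intro hcb; subst hcb; omega
      have hnn' : ¬ p'.Nil := by
        intro hn
        exact hcb (Walk.eq_of_length_eq_zero (Walk.nil_iff_length_eq.mp hn))
      have hle' : T.dist w b ≤ T.dist w c := by omega
      obtain ⟨c₂, hadj₂, hmem₂, hd2⟩ := ih hp.of_cons hnn' hle'
      have hane : a ≠ c₂ := by
        intro hac
        have : a ∉ p'.support := ((Walk.cons_isPath_iff h p').mp hp).2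
        exact this (hac ▸ hmem₂)
      have hcomm1 : T.dist a w = T.dist w a := SimpleGraph.dist_comm
      have hcomm2 : T.dist c w = T.dist w c := SimpleGraph.dist_comm
      have hcomm3 : T.dist c₂ w = T.dist w c₂ := SimpleGraph.dist_comm
      have h1 : T.dist a w + 1 = T.dist c w := by omega
      have h2 : T.dist c₂ w + 1 = T.dist c w := by omega
      exact hane (second_vertex_unique hT h.symm hadj₂ h1 h2)
    · exact ⟨c, h, by
        rw [Walk.support_cons]
        exact List.mem_cons_of_mem _ p'.start_mem_support, by omega⟩

end CollapseAux

namespace CollapseAux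

variable {V : Type*} {T : SimpleGraph V}

/-- Lemma E: if `s ~ t` and `y ~ z` with `y` strictly closer to `s` and `z` strictly closer
to `t`, then `y = s` and `z = t`. -/
lemma adj_cross (hT : T.IsTree) {s t y z : V} (hst : T.Adj s t) (hyz : T.Adj y z)
    (hy : T.dist y s < T.dist y t) (hz : T.dist z t < T.dist z s) : y = s ∧ z = t := by
  classical
  -- set up the parity facts
  have hys : T.dist y t = T.dist y s + 1 := by
    rcases dist_adj_cases hT hst y with hc | hc <;> omega
  have hzs : T.dist z s = T.dist z t + 1 := by
    rcases dist_adj_cases hT hst z with hc | hc <;> omega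
  have hpar_s := dist_adj_cases hT hyz s
  have hpar_t := dist_adj_cases hT hyz t
  have e1 : T.dist s z = T.dist z s := SimpleGraph.dist_comm
  have e2 : T.dist s y = T.dist y s := SimpleGraph.dist_comm
  have e3 : T.dist t z = T.dist z t := SimpleGraph.dist_comm
  have e4 : T.dist t y = T.dist y t := SimpleGraph.dist_comm
  have hk : T.dist y s = T.dist z t := by omega
  set k := T.dist z t with hkdef
  by_cases hk0 : k = 0
  · constructor
    · have : T.dist y s = 0 := by omega
      exact (hT.1.dist_eq_zero_iff).mp this
    · exact (hT.1.dist_eq_zero_iff).mp hk0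
  · exfalso
    obtain ⟨p1, hp1, hl1⟩ := exists_geodesic hT y s
    obtain ⟨p2, hp2, hl2⟩ := exists_geodesic hT z t
    have htns : t ∉ p1.support := by
      intro hmem
      have := dist_add_dist_le p1 hmem
      omega
    have hynz : y ∉ p2.support := by
      intro hmem
      have := dist_add_dist_le p2 hmem
      have hc : T.dist z y = 1 := SimpleGraph.dist_eq_one_iff_adj.mpr hyz.symm
      omega
    have hP1 : (p1.concat hst).IsPath := by
      rw [← Walk.isPath_reverse_iff, Walk.reverse_concat]
      exact hp1.reverse.cons (by simpa [Walk.support_reverse] using htns)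
    have hP2 : (Walk.cons hyz p2).IsPath := hp2.cons hynz
    have heq := walk_unique hT (p1.concat hst) (Walk.cons hyz p2) hP1 hP2
    have hzmem : z ∈ (p1.concat hst).support := by
      rw [heq, Walk.support_cons]
      exact List.mem_cons_of_mem _ p2.start_mem_support
    rw [Walk.support_concat] at hzmem
    rcases List.mem_append.mp hzmem with hmem | hzt'
    swap
    · have hzt : z = t := List.mem_singleton.mp hzt'
      have : T.dist z t = 0 := by
        rw [hzt]
        exact (hT.1.dist_eq_zero_iff).mpr rfl
      omega
    · have := dist_add_dist_le p1 hmem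
      omega

/-- extract a walk in `T` with support inside `A` from a walk in the induced graph. -/
lemma walk_of_induce {A : Set V} :
    ∀ {a b : ↥A} (_ : (T.induce A).Walk a b), ∃ w : T.Walk a.1 b.1, ∀ v ∈ w.support, v ∈ A := by
  intro a b p
  induction p with
  | nil =>
    refine ⟨Walk.nil, ?_⟩
    intro v hv
    simp only [Walk.support_nil, List.mem_singleton] at hv
    subst hv
    exact Subtype.coe_prop _
  | @cons a c b h p' ih =>
    obtain ⟨w', hw'⟩ := ih
    have hadj : T.Adj a.1 c.1 := h
    exact ⟨Walk.cons hadj w', by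
      intro v hv
      rw [Walk.support_cons] at hv
      rcases List.mem_cons.mp hv with rfl | hv
      · exact a.2
      · exact hw' v hv⟩

/-- along any walk, a predicate that holds at the start and fails at the end must
fail for the first time across an edge. -/
lemma exists_crossing {P : V → Prop} :
    ∀ {a b : V} (_ : T.Walk a b), P a → ¬ P b →
      ∃ x x', T.Adj x x' ∧ P x ∧ ¬ P x' := by
  intro a b p
  induction p with
  | nil => intro h h'; exact absurd h h'
  | @cons a c b h p' ih =>
    intro hpa hpb
    by_cases hc : P c
    · exact ih hc hpb
    · exact ⟨a, c, h, hpa, hc⟩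

end CollapseAux

namespace CollapseAux

section Equivariance

variable {G : Type*} [Group G] {V : Type*} [MulAction G V] {T : SimpleGraph V}

def gHom (hGT : IsGTree G T) (g : G) : T →g T :=
  ⟨fun v => g • v, fun {a b} h => hGT.adj_smul g a b h⟩

lemma smul_adj_iff (hGT : IsGTree G T) (g : G) {u v : V} :
    T.Adj (g • u) (g • v) ↔ T.Adj u v := by
  constructor
  · intro h
    have := hGT.adj_smul g⁻¹ _ _ h
    simpa using this
  · exact hGT.adj_smul g u v

lemma dist_smul (hGT : IsGTree G T) (g : G) (u v : V) :
    T.dist (g • u) (g • v) = T.dist u v := by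
  have key : ∀ (g : G) (u v : V), T.dist (g • u) (g • v) ≤ T.dist u v := by
    intro g u v
    obtain ⟨p, _, hl⟩ := exists_geodesic hGT.isTree u v
    have := SimpleGraph.dist_le (p.map (gHom hGT g))
    rwa [Walk.length_map, hl] at this
  refine le_antisymm (key g u v) ?_
  have := key g⁻¹ (g • u) (g • v)
  simpa using this

end Equivariance

section Interior

variable {V : Type*} {T : SimpleGraph V}

lemma walk_interior {C : Set V} {P : V → Prop}
    (hmid : ∀ x y v, x ∈ C → y ∈ C → v ∈ C → x ≠ y → T.Adj x v → T.Adj y v → P v) :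
    ∀ {a b : V} (p : T.Walk a b), p.IsPath → (∀ v ∈ p.support, v ∈ C) →
      P a → P b → ∀ v ∈ p.support, P v := by
  intro a b p
  induction p with
  | nil =>
    intro _ _ ha _ v hv
    simp only [Walk.support_nil, List.mem_singleton] at hv
    exact hv ▸ ha
  | @cons a c b h p' ih =>
    intro hp hsup ha hb v hv
    have hc : P c := by
      cases p' with
      | nil => exact hb
      | @cons c c₂ b h₂ p'' =>
        have hac : a ≠ c₂ := by
          intro he
          have hnot : a ∉ (Walk.cons h₂ p'').support := ((Walk.cons_isPath_iff h _).mp hp).2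
          apply hnot
          rw [Walk.support_cons]
          exact List.mem_cons_of_mem _ (he ▸ p''.start_mem_support)
        refine hmid a c₂ c ?_ ?_ ?_ hac h h₂.symm
        · refine hsup a ?_
          rw [Walk.support_cons]
          exact List.mem_cons_self
        · refine hsup c₂ ?_
          rw [Walk.support_cons, Walk.support_cons]
          exact List.mem_cons_of_mem _ (List.mem_cons_of_mem _ p''.start_mem_support)
        · refine hsup c ?_
          rw [Walk.support_cons]
          exact List.mem_cons_of_mem _ ((Walk.cons h₂ p'').start_mem_support)
    rw [Walk.support_cons] at hv
    rcases List.mem_cons.mp hv with rfl | hv'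
    · exact ha
    · refine ih hp.of_cons (fun v hv => hsup v ?_) hc hb v hv'
      rw [Walk.support_cons]
      exact List.mem_cons_of_mem _ hv

lemma adj_or_interior {C : Set V} {P : V → Prop}
    (hmid : ∀ x y v, x ∈ C → y ∈ C → v ∈ C → x ≠ y → T.Adj x v → T.Adj y v → P v) :
    ∀ {a b : V} (p : T.Walk a b), p.IsPath → (∀ v ∈ p.support, v ∈ C) → a ≠ b →
      T.Adj a b ∨ ∃ v, P v := by
  intro a b p hp hsup hne
  cases p with
  | nil => exact absurd rfl hne
  | @cons a c b h p' =>
    cases p' with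
    | nil => exact Or.inl h
    | @cons c c₂ b h₂ p'' =>
      right
      have hac : a ≠ c₂ := by
        intro he
        have hnot : a ∉ (Walk.cons h₂ p'').support := ((Walk.cons_isPath_iff h _).mp hp).2
        apply hnot
        rw [Walk.support_cons]
        exact List.mem_cons_of_mem _ (he ▸ p''.start_mem_support)
      refine ⟨c, hmid a c₂ c ?_ ?_ ?_ hac h h₂.symm⟩
      · refine hsup a ?_
        rw [Walk.support_cons]
        exact List.mem_cons_self
      · refine hsup c₂ ?_
        rw [Walk.support_cons, Walk.support_cons]
        exact List.mem_cons_of_mem _ (List.mem_cons_of_mem _ p''.start_mem_support)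
      · refine hsup c ?_
        rw [Walk.support_cons]
        exact List.mem_cons_of_mem _ ((Walk.cons h₂ p'').start_mem_support)

end Interior

section Fin

variable {G : Type*} [Group G] {V : Type*} [MulAction G V] {T : SimpleGraph V}

lemma fixed_of_finite_invariant (hX : IsGTree G T) (H : Subgroup G) :
    ∀ (n : ℕ) (C : Set V) (hfin : C.Finite), hfin.toFinset.card ≤ n → C.Nonempty →
      (∀ h ∈ H, ∀ x ∈ C, h • x ∈ C) →
      (∀ a ∈ C, ∀ b ∈ C, ∃ p : T.Walk a b, ∀ v ∈ p.support, v ∈ C) →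
      ∃ v : V, ∀ h ∈ H, h • v = v := by
  intro n
  induction n with
  | zero =>
    intro C hfin hcard hne _ _
    obtain ⟨x, hx⟩ := hne
    have hmem : x ∈ hfin.toFinset := hfin.mem_toFinset.mpr hx
    have := Finset.card_pos.mpr ⟨x, hmem⟩
    omega
  | succ n ih =>
    intro C hfin hcard hne hinv hconn
    classical
    by_cases h1 : hfin.toFinset.card ≤ 1
    · obtain ⟨x, hx⟩ := hne
      refine ⟨x, fun h hH => ?_⟩
      exact Finset.card_le_one.mp h1 _ (hfin.mem_toFinset.mpr (hinv h hH x hx)) _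
        (hfin.mem_toFinset.mpr hx)
    · push_neg at h1
      obtain ⟨a, ha, b, hb, hab⟩ := Finset.one_lt_card.mp h1
      rw [hfin.mem_toFinset] at ha hb
      set C' : Set V := {v | v ∈ C ∧ ∃ x ∈ C, ∃ y ∈ C, x ≠ y ∧ T.Adj x v ∧ T.Adj y v}
        with hC'def
      have hC'sub : C' ⊆ C := fun v hv => hv.1
      have hmid : ∀ x y v, x ∈ C → y ∈ C → v ∈ C → x ≠ y → T.Adj x v → T.Adj y v → v ∈ C' :=
        fun x y v hx hy hv hxy hxv hyv => ⟨hv, x, hx, y, hy, hxy, hxv, hyv⟩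
      -- a path within C between two distinct points of C
      have hpath : ∀ x ∈ C, ∀ y ∈ C, ∃ p : T.Walk x y, p.IsPath ∧ ∀ v ∈ p.support, v ∈ C := by
        intro x hx y hy
        obtain ⟨p, hp⟩ := hconn x hx y hy
        exact ⟨p.toPath, p.toPath.2, fun v hv => hp v (Walk.support_toPath_subset p hv)⟩
      by_cases hC'ne : C'.Nonempty
      · -- recurse on the interior
        have hC'fin : C'.Finite := hfin.subset hC'sub
        -- a leaf: endpoint of a pair at maximal distance
        obtain ⟨uv, huv, hmax⟩ := Finset.exists_max_image (hfin.toFinset ×ˢ hfin.toFinset)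
          (fun p => T.dist p.1 p.2) ⟨(a, b), Finset.mem_product.mpr ⟨hfin.mem_toFinset.mpr ha,
            hfin.mem_toFinset.mpr hb⟩⟩
        obtain ⟨u, v⟩ := uv
        rw [Finset.mem_product, hfin.mem_toFinset, hfin.mem_toFinset] at huv
        obtain ⟨huC, hvC⟩ := huv
        have hmax' : ∀ x ∈ C, ∀ y ∈ C, T.dist x y ≤ T.dist u v := by
          intro x hx y hy
          exact hmax (x, y) (Finset.mem_product.mpr ⟨hfin.mem_toFinset.mpr hx,
            hfin.mem_toFinset.mpr hy⟩)
        have hDpos : 0 < T.dist u v := by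
          have h0 := hX.isTree.1.pos_dist_of_ne hab
          have := hmax' a ha b hb
          omega
        have huniv : u ∉ C' := by
          rintro ⟨-, x, hx, y, hy, hxy, hxu, hyu⟩
          apply hxy
          have hxv : T.dist x v + 1 = T.dist u v := by
            have hpar := dist_adj_cases hX.isTree hxu v
            have hle := hmax' x hx v hvC
            have e1 : T.dist v x = T.dist x v := SimpleGraph.dist_comm
            have e2 : T.dist v u = T.dist u v := SimpleGraph.dist_comm
            omega
          have hyv : T.dist y v + 1 = T.dist u v := by
            have hpar := dist_adj_cases hX.isTree hyu v
            have hle := hmax' y hy v hvC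
            have e1 : T.dist v y = T.dist y v := SimpleGraph.dist_comm
            have e2 : T.dist v u = T.dist u v := SimpleGraph.dist_comm
            omega
          exact second_vertex_unique hX.isTree hxu.symm hyu.symm hxv hyv
        have hcardlt : hC'fin.toFinset.card < hfin.toFinset.card := by
          apply Finset.card_lt_card
          constructor
          · intro x hx
            rw [hC'fin.mem_toFinset] at hx
            exact hfin.mem_toFinset.mpr (hC'sub hx)
          · intro hsub
            have := hsub (hfin.mem_toFinset.mpr huC)
            rw [hC'fin.mem_toFinset] at this
            exact huniv this
        refine ih C' hC'fin (by omega) hC'ne ?_ ?_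
        · rintro h hH x ⟨hxC, y, hy, z, hz, hyz, hyx, hzx⟩
          refine ⟨hinv h hH x hxC, h • y, hinv h hH y hy, h • z, hinv h hH z hz, ?_, ?_, ?_⟩
          · intro he; exact hyz (MulAction.injective h he)
          · exact hX.adj_smul h y x hyx
          · exact hX.adj_smul h z x hzx
        · intro x hx y hy
          obtain ⟨p, hp, hsup⟩ := hpath x (hC'sub hx) y (hC'sub hy)
          exact ⟨p, walk_interior hmid p hp hsup hx hy⟩
      · -- no interior: C has exactly two elements a, b, adjacent
        have hadj : ∀ x ∈ C, ∀ y ∈ C, x ≠ y → T.Adj x y := by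
          intro x hx y hy hxy
          obtain ⟨p, hp, hsup⟩ := hpath x hx y hy
          rcases adj_or_interior hmid p hp hsup hxy with h | ⟨v, hv⟩
          · exact h
          · exact absurd ⟨v, hv⟩ hC'ne
        have hsub2 : ∀ c ∈ C, c = a ∨ c = b := by
          intro c hc
          by_contra hcon
          push_neg at hcon
          obtain ⟨hca, hcb⟩ := hcon
          exact hC'ne ⟨a, hmid c b a hc hb ha hcb (hadj c hc a ha hca) ((hadj a ha b hb hab).symm)⟩
        have hAB : T.Adj a b := hadj a ha b hb hab
        refine ⟨a, fun h hH => ?_⟩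
        rcases hsub2 _ (hinv h hH a ha) with h1 | h1
        · exact h1
        · exfalso
          rcases hsub2 _ (hinv h hH b hb) with h2 | h2
          · exact hX.no_inversions h a b hAB ⟨h1, h2⟩
          · exact hab (MulAction.injective h (h1.trans h2.symm))

end Fin

end CollapseAux

namespace CollapseAux

/-- Between the fibres over two adjacent vertices there is exactly one crossing point. -/
lemma bridge_exists_unique {VX VY : Type*} {X : SimpleGraph VX} {Y : SimpleGraph VY}
    (hXT : X.IsTree) (hYT : Y.IsTree) (q : VX → VY)
    (hq_surj : Function.Surjective q)
    (hq_simp : ∀ u v : VX, X.Adj u v → q u = q v ∨ Y.Adj (q u) (q v))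
    (hq_conn : ∀ y : VY, (X.induce (q ⁻¹' {y})).Connected)
    {s t : VY} (hst : Y.Adj s t) :
    ∃ x : VX, (q x = s ∧ ∃ x', X.Adj x x' ∧ q x' = t) ∧
      ∀ y : VX, (q y = s ∧ ∃ y', X.Adj y y' ∧ q y' = t) → y = x := by
  classical
  have hstne : s ≠ t := hst.ne
  -- existence of a crossing pair
  obtain ⟨a0, ha0⟩ := hq_surj s
  obtain ⟨b0, hb0⟩ := hq_surj t
  obtain ⟨pX⟩ := hXT.1.preconnected a0 b0
  have hPa : Y.dist (q a0) s < Y.dist (q a0) t := by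
    rw [ha0, SimpleGraph.dist_self, SimpleGraph.dist_eq_one_iff_adj.mpr hst]
    omega
  have hPb : ¬ Y.dist (q b0) s < Y.dist (q b0) t := by
    rw [hb0, SimpleGraph.dist_self, SimpleGraph.dist_eq_one_iff_adj.mpr hst.symm]
    omega
  obtain ⟨x, x', hadj, hPx, hPx'⟩ :=
    exists_crossing (P := fun z => Y.dist (q z) s < Y.dist (q z) t) pX hPa hPb
  have hqne : q x ≠ q x' := by
    intro he
    rw [he] at hPx
    exact hPx' hPx
  have hqadj : Y.Adj (q x) (q x') := (hq_simp x x' hadj).resolve_left hqne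
  have hPx'' : Y.dist (q x') t < Y.dist (q x') s := by
    have hne := dist_ne_of_adj hYT hst (q x')
    omega
  obtain ⟨hqx, hqx'⟩ := adj_cross hYT hst hqadj hPx hPx''
  -- uniqueness of the crossing point
  have huniq : ∀ x₁ x₂ : VX, (q x₁ = s ∧ ∃ y, X.Adj x₁ y ∧ q y = t) →
      (q x₂ = s ∧ ∃ y, X.Adj x₂ y ∧ q y = t) → x₁ = x₂ := by
    rintro x₁ x₂ ⟨hq1, x₁', hadj1, hq1'⟩ ⟨hq2, x₂', hadj2, hq2'⟩
    by_contra hne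
    -- walk within the fibre over s from x₁ to x₂
    obtain ⟨ps⟩ := (hq_conn s).preconnected ⟨x₁, by simp [hq1]⟩ ⟨x₂, by simp [hq2]⟩
    obtain ⟨ws, hws⟩ := walk_of_induce ps
    -- walk within the fibre over t from x₁' to x₂'
    obtain ⟨pt⟩ := (hq_conn t).preconnected ⟨x₁', by simp [hq1']⟩ ⟨x₂', by simp [hq2']⟩
    obtain ⟨wt, hwt⟩ := walk_of_induce pt
    have hws' : ∀ z ∈ ws.support, q z = s := fun z hz => hws z hz
    have hwt' : ∀ z ∈ wt.support, q z = t := fun z hz => hwt z hz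
    set W2 : X.Walk x₁ x₂ :=
      Walk.cons hadj1 (wt.append (Walk.cons hadj2.symm Walk.nil)) with hW2def
    have PQ : (ws.toPath : X.Walk x₁ x₂) = (W2.toPath : X.Walk x₁ x₂) :=
      walk_unique hXT _ _ ws.toPath.2 W2.toPath.2
    have hlenpos : 0 < (ws.toPath : X.Walk x₁ x₂).length := by
      rcases Nat.eq_zero_or_pos (ws.toPath : X.Walk x₁ x₂).length with h0 | h0
      · exact absurd (Walk.eq_of_length_eq_zero h0) hne
      · exact h0
    have hedne : (ws.toPath : X.Walk x₁ x₂).edges ≠ [] := by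
      intro hnil
      have := Walk.length_edges (ws.toPath : X.Walk x₁ x₂)
      rw [hnil] at this
      simp at this
      omega
    obtain ⟨e, he⟩ := List.exists_mem_of_ne_nil _ hedne
    have he2 : e ∈ W2.edges := Walk.edges_toPath_subset W2 (PQ ▸ he)
    have key : ∀ z₁ z₂ : VX, s(z₁, z₂) ∈ (ws.toPath : X.Walk x₁ x₂).edges →
        s(z₁, z₂) ∈ W2.edges → False := by
      intro z₁ z₂ he he2
      have hz₁ : q z₁ = s := hws' z₁ (Walk.support_toPath_subset ws
        ((ws.toPath : X.Walk x₁ x₂).fst_mem_support_of_mem_edges he))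
      have hz₂ : q z₂ = s := hws' z₂ (Walk.support_toPath_subset ws
        ((ws.toPath : X.Walk x₁ x₂).snd_mem_support_of_mem_edges he))
      rw [hW2def] at he2
      simp only [Walk.edges_cons, Walk.edges_append, Walk.edges_nil, List.mem_cons,
        List.mem_append, List.mem_singleton, List.append_nil] at he2
      rcases he2 with h | h | h | h
      · rw [Sym2.eq_iff] at h
        rcases h with h | h
        · exact hstne (by rw [← hz₂, h.2]; exact hq1')
        · exact hstne (by rw [← hz₁, h.1]; exact hq1')
      · have ht1 := hwt' z₁ (wt.fst_mem_support_of_mem_edges h)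
        exact hstne (by rw [← hz₁]; exact ht1)
      · rw [Sym2.eq_iff] at h
        rcases h with h | h
        · exact hstne (by rw [← hz₁, h.1]; exact hq2')
        · exact hstne (by rw [← hz₂, h.2]; exact hq2')
      · simp at h
    revert he he2
    refine Sym2.ind (fun z₁ z₂ => ?_) e
    intro he he2
    exact key z₁ z₂ he he2
  exact ⟨x, ⟨hqx, x', hadj, hqx'⟩, fun y hy => huniq y x hy ⟨hqx, x', hadj, hqx'⟩⟩

end CollapseAux


open SimpleGraph CollapseAux

/-- If `Y` is a `G`-tree containing a non-trivial locally finite `G`-invariant subtree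
and `q : X → Y` is a `G`-equivariant collapse map (surjective simplicial map with
connected point preimages), then `X` and `Y` have the same elliptic subgroups. -/
theorem collapse_map_same_elliptic_subgroups
    (G : Type*) [Group G] (VX VY : Type*) [MulAction G VX] [MulAction G VY]
    (X : SimpleGraph VX) (Y : SimpleGraph VY)
    (hX : IsGTree G X) (hY : IsGTree G Y)
    -- Y contains a non-trivial locally finite G-invariant subtree S
    (S : Set VY) (hSne : S.Nonempty)
    (hSinv : ∀ (g : G), ∀ v ∈ S, g • v ∈ S)
    (hSconn : (Y.induce S).Connected)
    (hSlf : ∀ v ∈ S, {w ∈ S | Y.Adj v w}.Finite)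
    (hSnontriv : ¬ ∃ v ∈ S, ∀ g : G, g • v = v)
    -- q is a G-equivariant collapse map
    (q : VX → VY)
    (hq_equiv : ∀ (g : G) (x : VX), q (g • x) = g • q x)
    (hq_surj : Function.Surjective q)
    (hq_simp : ∀ u v : VX, X.Adj u v → q u = q v ∨ Y.Adj (q u) (q v))
    (hq_conn : ∀ y : VY, (X.induce (q ⁻¹' {y})).Connected) :
    ∀ H : Subgroup G,
      (∃ v : VX, ∀ h ∈ H, h • v = v) ↔ (∃ w : VY, ∀ h ∈ H, h • w = w) := by
  intro H
  constructor
  · rintro ⟨v, hv⟩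
    refine ⟨q v, fun h hH => ?_⟩
    rw [← hq_equiv, hv h hH]
  · rintro ⟨w, hw⟩
    classical
    have hYT := hY.isTree
    have hXT := hX.isTree
    -- Step 1 : H fixes the point of S nearest to w
    have hdset : {n | ∃ v ∈ S, Y.dist w v = n}.Nonempty := by
      obtain ⟨v, hv⟩ := hSne
      exact ⟨Y.dist w v, v, hv, rfl⟩
    obtain ⟨s₀, hs₀S, hs₀d⟩ := Nat.sInf_mem hdset
    set dmin := sInf {n | ∃ v ∈ S, Y.dist w v = n} with hdmindef
    have hmin : ∀ v ∈ S, dmin ≤ Y.dist w v := fun v hv => Nat.sInf_le ⟨v, hv, rfl⟩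
    have huniq : ∀ v ∈ S, Y.dist w v = dmin → v = s₀ := by
      intro v hv hvd
      by_contra hne
      obtain ⟨pind⟩ := hSconn.preconnected ⟨v, hv⟩ ⟨s₀, hs₀S⟩
      obtain ⟨p0, hp0⟩ := walk_of_induce pind
      have hsupP : ∀ x ∈ (p0.toPath : Y.Walk v s₀).support, x ∈ S :=
        fun x hx => hp0 x (Walk.support_toPath_subset p0 hx)
      have hnn : ¬ (p0.toPath : Y.Walk v s₀).Nil := by
        intro hn
        exact hne (Walk.eq_of_length_eq_zero (Walk.nil_iff_length_eq.mp hn))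
      obtain ⟨c, hcadj, hcmem, hcd⟩ := downhill hYT w _ (p0.toPath).2 hnn
        (by rw [hvd, hs₀d])
      have := hmin c (hsupP c hcmem)
      rw [show (Y.dist w (↑(⟨v, hv⟩ : ↥S)) : ℕ) = Y.dist w v from rfl] at hcd
      omega
    have hs₀fix : ∀ h ∈ H, h • s₀ = s₀ := by
      intro h hH
      refine huniq _ (hSinv h s₀ hs₀S) ?_
      have h1 : Y.dist w (h • s₀) = Y.dist (h • w) (h • s₀) := by rw [hw h hH]
      rw [h1, dist_smul hY h w s₀, hs₀d]
    -- Step 2 : a neighbour of s₀ inside S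
    have hother : ∃ u ∈ S, u ≠ s₀ := by
      by_contra hcon
      push_neg at hcon
      exact hSnontriv ⟨s₀, hs₀S, fun g => hcon _ (hSinv g s₀ hs₀S)⟩
    obtain ⟨u₀, hu₀S, hu₀ne⟩ := hother
    have hnbr : ∃ t ∈ S, Y.Adj s₀ t := by
      obtain ⟨pind⟩ := hSconn.preconnected ⟨s₀, hs₀S⟩ ⟨u₀, hu₀S⟩
      obtain ⟨p0, hp0⟩ := walk_of_induce pind
      cases p0 with
      | nil => exact absurd rfl hu₀ne
      | @cons _ c _ h p' =>
        refine ⟨c, hp0 c ?_, h⟩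
        rw [Walk.support_cons]
        exact List.mem_cons_of_mem _ p'.start_mem_support
    obtain ⟨t₀, ht₀S, ht₀adj⟩ := hnbr
    -- Step 3 : the set of bridgeheads
    set N : Set VY := {u | u ∈ S ∧ Y.Adj s₀ u} with hNdef
    have hNfin : N.Finite := (hSlf s₀ hs₀S).subset (fun u hu => ⟨hu.1, hu.2⟩)
    have ht₀N : t₀ ∈ N := ⟨ht₀S, ht₀adj⟩
    have bridge : ∀ u ∈ N, ∃ x : VX, (q x = s₀ ∧ ∃ x', X.Adj x x' ∧ q x' = u) ∧
        ∀ y : VX, (q y = s₀ ∧ ∃ y', X.Adj y y' ∧ q y' = u) → y = x :=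
      fun u hu => bridge_exists_unique hXT hYT q hq_surj hq_simp hq_conn hu.2
    choose f hf hfu using bridge
    set B : Set VX := {x | ∃ u, ∃ hu : u ∈ N, f u hu = x} with hBdef
    have hBfin : B.Finite := hNfin.dependent_image f
    have hBne : B.Nonempty := ⟨f t₀ ht₀N, t₀, ht₀N, rfl⟩
    have hBinv : ∀ h ∈ H, ∀ x ∈ B, h • x ∈ B := by
      rintro h hH x ⟨u, hu, rfl⟩
      have huN : h • u ∈ N := by
        refine ⟨hSinv h u hu.1, ?_⟩
        have := hY.adj_smul h s₀ u hu.2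
        rwa [hs₀fix h hH] at this
      refine ⟨h • u, huN, ?_⟩
      symm
      apply hfu (h • u) huN
      obtain ⟨hq1, x', hadj', hq2⟩ := hf u hu
      refine ⟨?_, h • x', hX.adj_smul h _ _ hadj', ?_⟩
      · rw [hq_equiv, hq1, hs₀fix h hH]
      · rw [hq_equiv, hq2]
    -- Step 4 : the convex hull of the bridgeheads
    have pth : ∀ a b : VX, ∃ p : X.Walk a b, p.IsPath := by
      intro a b
      obtain ⟨p, hp, -⟩ := exists_geodesic hXT a b
      exact ⟨p, hp⟩
    choose pth hpth using pth
    have hpthmap : ∀ (h : G) (a b : VX) (v : VX), v ∈ (pth a b).support →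
        h • v ∈ (pth (h • a) (h • b)).support := by
      intro h a b v hv
      have hmp : ((pth a b).map (gHom hX h)).IsPath :=
        Walk.map_isPath_of_injective (MulAction.injective h) (hpth a b)
      have heq : (pth a b).map (gHom hX h) = pth (h • a) (h • b) :=
        walk_unique hXT _ _ hmp (hpth _ _)
      have : h • v ∈ ((pth a b).map (gHom hX h)).support := by
        rw [Walk.support_map]
        exact List.mem_map_of_mem hv
      rwa [heq] at this
    set C : Set VX := {v | ∃ a, a ∈ B ∧ ∃ b, b ∈ B ∧ v ∈ (pth a b).support} with hCdef
    have hCfin : C.Finite := by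
      refine Set.Finite.subset (Set.Finite.biUnion hBfin (fun a _ =>
        Set.Finite.biUnion hBfin (fun b _ => (pth a b).support.finite_toSet))) ?_
      rintro v ⟨a, ha, b, hb, hv⟩
      exact Set.mem_biUnion ha (Set.mem_biUnion hb hv)
    have hBC : ∀ x ∈ B, x ∈ C := fun x hx => ⟨x, hx, x, hx, (pth x x).start_mem_support⟩
    have hCne : C.Nonempty := by
      obtain ⟨x, hx⟩ := hBne
      exact ⟨x, hBC x hx⟩
    have hCinv : ∀ h ∈ H, ∀ x ∈ C, h • x ∈ C := by
      rintro h hH x ⟨a, ha, b, hb, hx⟩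
      exact ⟨h • a, hBinv h hH a ha, h • b, hBinv h hH b hb, hpthmap h a b x hx⟩
    have hCconn : ∀ a ∈ C, ∀ b ∈ C, ∃ p : X.Walk a b, ∀ v ∈ p.support, v ∈ C := by
      rintro a' ⟨a, ha, b, hb, ha'⟩ b' ⟨c, hc, d, hd, hb'⟩
      refine ⟨((pth a b).dropUntil a' ha').append ((pth b c).append
        ((pth c d).takeUntil b' hb')), ?_⟩
      intro v hv
      rw [Walk.mem_support_append_iff] at hv
      rcases hv with hv | hv
      · exact ⟨a, ha, b, hb, Walk.support_dropUntil_subset _ ha' hv⟩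
      · rw [Walk.mem_support_append_iff] at hv
        rcases hv with hv | hv
        · exact ⟨b, hb, c, hc, hv⟩
        · exact ⟨c, hc, d, hd, Walk.support_takeUntil_subset _ hb' hv⟩
    exact fixed_of_finite_invariant hX H hCfin.toFinset.card C hCfin le_rfl hCne hCinv hCconn
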